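/- arXiv:1605.07806 — 7 statements merged into one kernel-verified Lean document; each statement's English description precedes it below -/
import Mathlib

section
/- Let G be a group acting transitively on a finite set α. For each pair of distinct elements x, y of α, let Γ_{x,y} be the simple graph on vertex set α in which two distinct vertices a and b are adjacent if and only if the pair (a,b) or the pair (b,a) lies in the G-orbit of (x,y) under the diagonal action of G on α × α. Then the action of G on α is primitive (i.e., preprimitive: transitive with only trivial blocks) if and only if for every pair of distinct elements x ≠ y of α the graph Γ_{x,y} is connected. (Higman's Theorem.) -/
/-!
The connected components of a `G`-invariant graph are permuted by `G`, so they are blocks.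
If the action is primitive, the component of `x` in `Γ_{x,y}` contains `x ≠ y`, hence is
everything. Conversely, if `B` is a block containing `x ≠ y`, every edge `g • {x, y}` of
`Γ_{x,y}` with one end in `B` has both ends in `g • B = B`, so `B` is closed under
reachability and a connected `Γ_{x,y}` forces `B = univ`.
-/

/-- A multiplicative action is *preprimitive* (primitive) if it is pretransitive and
its only blocks are trivial (subsingletons or the whole set). -/
def IsPreprimitive (G α : Type*) [Group G] [MulAction G α] : Prop :=
  MulAction.IsPretransitive G α ∧
    ∀ B : Set α, MulAction.IsBlock G B → MulAction.IsTrivialBlock B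

open Pointwise

namespace SimpleGraph

variable {α : Type*} {Γ : SimpleGraph α}

theorem Reachable.mem_of_forall_adj {s : Set α} (hs : ∀ a b, Γ.Adj a b → a ∈ s → b ∈ s)
    {a b : α} (h : Γ.Reachable a b) (ha : a ∈ s) : b ∈ s := by
  obtain ⟨w⟩ := h
  induction w with
  | nil => exact ha
  | cons hadj _ ih => exact ih (hs _ _ hadj ha)

variable {G : Type*} [Group G] [MulAction G α]

theorem reachable_smul_iff (hΓ : ∀ (g : G) {a b : α}, Γ.Adj a b → Γ.Adj (g • a) (g • b))
    (g : G) {a b : α} : Γ.Reachable (g • a) (g • b) ↔ Γ.Reachable a b := by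
  have reachable_smul (g : G) {a b : α} (h : Γ.Reachable a b) : Γ.Reachable (g • a) (g • b) :=
    h.map ⟨(g • ·), hΓ g⟩
  exact ⟨fun h => by simpa using reachable_smul g⁻¹ h, reachable_smul g⟩

theorem isBlock_setOf_reachable (hΓ : ∀ (g : G) {a b : α}, Γ.Adj a b → Γ.Adj (g • a) (g • b))
    (x : α) : MulAction.IsBlock G {z | Γ.Reachable x z} := by
  have smul_eq (g : G) : g • {z | Γ.Reachable x z} = {z | Γ.Reachable (g • x) z} := by
    ext w
    rw [Set.mem_smul_set_iff_inv_smul_mem, Set.mem_ofPred_eq, Set.mem_ofPred_eq,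
      ← reachable_smul_iff hΓ g, smul_inv_smul]
  rw [MulAction.isBlock_iff_smul_eq_of_mem]
  rintro g a (hxa : Γ.Reachable x a) (hxga : Γ.Reachable x (g • a))
  have hx : Γ.Reachable x (g • x) := hxga.trans ((reachable_smul_iff hΓ g).2 hxa).symm
  rw [smul_eq]
  ext z
  exact ⟨hx.trans, hx.symm.trans⟩

end SimpleGraph

namespace MulAction

variable (G : Type*) [Group G] {α : Type*} [MulAction G α]

def orbitalGraph (x y : α) : SimpleGraph α :=
  SimpleGraph.fromRel fun a b => (a, b) ∈ orbit G (x, y)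

variable {G}

theorem orbitalGraph_adj_smul (x y : α) (g : G) {a b : α} (h : (orbitalGraph G x y).Adj a b) :
    (orbitalGraph G x y).Adj (g • a) (g • b) := by
  obtain ⟨hne, hab⟩ := h
  exact ⟨(smul_left_cancel g).mt hne,
    hab.imp (mem_orbit_of_mem_orbit g) (mem_orbit_of_mem_orbit g)⟩

theorem orbitalGraph_connected_of_forall_isTrivialBlock
    (hB : ∀ B : Set α, IsBlock G B → IsTrivialBlock B) {x y : α} (hxy : x ≠ y) :
    (orbitalGraph G x y).Connected := by
  have hadj : (orbitalGraph G x y).Adj x y := ⟨hxy, .inl (mem_orbit_self _)⟩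
  rcases hB _ (SimpleGraph.isBlock_setOf_reachable (orbitalGraph_adj_smul x y) x) with
    hsub | huniv
  · exact absurd (hsub .rfl hadj.reachable) hxy
  · exact (SimpleGraph.connected_iff_exists_forall_reachable _).2
      ⟨x, fun z => (huniv ▸ Set.mem_univ z :)⟩

variable {B : Set α}

theorem IsBlock.smul_mem_of_smul_mem (hB : IsBlock G B) {x y : α} (hx : x ∈ B) (hy : y ∈ B)
    {g : G} (hgx : g • x ∈ B) : g • y ∈ B := by
  rw [← hB.smul_eq_of_mem hx hgx]
  exact Set.smul_mem_smul_set hy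

theorem IsBlock.mem_of_orbitalGraph_adj (hB : IsBlock G B) {x y : α} (hx : x ∈ B) (hy : y ∈ B)
    {a b : α} (hab : (orbitalGraph G x y).Adj a b) (ha : a ∈ B) : b ∈ B := by
  rcases hab.2 with ⟨g, hg⟩ | ⟨g, hg⟩
  · obtain ⟨rfl, rfl⟩ := Prod.ext_iff.1 hg
    exact hB.smul_mem_of_smul_mem hx hy ha
  · obtain ⟨rfl, rfl⟩ := Prod.ext_iff.1 hg
    exact hB.smul_mem_of_smul_mem hy hx ha

theorem IsBlock.isTrivialBlock_of_orbitalGraph_connected (hB : IsBlock G B)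
    (hconn : ∀ x y : α, x ≠ y → (orbitalGraph G x y).Connected) : IsTrivialBlock B := by
  refine or_iff_not_imp_left.2 fun hns => ?_
  obtain ⟨x, hx, y, hy, hxy⟩ := Set.not_subsingleton_iff.1 hns
  exact Set.eq_univ_of_forall fun z =>
    ((hconn x y hxy).preconnected x z).mem_of_forall_adj
      (fun _ _ => hB.mem_of_orbitalGraph_adj hx hy) hx

end MulAction

theorem higman_primitive_iff_orbital_graphs_connected_general
    {G : Type*} [Group G] {α : Type*} [MulAction G α]
    (htrans : MulAction.IsPretransitive G α) :
    IsPreprimitive G α ↔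
      ∀ x y : α, x ≠ y →
        (SimpleGraph.fromRel fun a b => (a, b) ∈ MulAction.orbit G ((x, y) : α × α)).Connected :=
  ⟨fun h _ _ hxy => MulAction.orbitalGraph_connected_of_forall_isTrivialBlock h.2 hxy,
    fun h => ⟨htrans, fun _ hB => hB.isTrivialBlock_of_orbitalGraph_connected h⟩⟩

/-- **Higman's Theorem.** A transitive action of a group `G` on a finite set `α` is
primitive if and only if, for every pair of distinct points `x ≠ y`, the orbital graph
`Γ_{x,y}` (vertices `α`, with `a ∼ b` iff `a ≠ b` and `(a,b)` or `(b,a)` lies in the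
`G`-orbit of `(x,y)` in `α × α`) is connected. -/
theorem higman_primitive_iff_orbital_graphs_connected
    {G : Type*} [Group G] {α : Type*} [Finite α] [MulAction G α]
    (htrans : MulAction.IsPretransitive G α) :
    IsPreprimitive G α ↔
      ∀ x y : α, x ≠ y →
        (SimpleGraph.fromRel fun a b => (a, b) ∈ MulAction.orbit G ((x, y) : α × α)).Connected :=
  higman_primitive_iff_orbital_graphs_connected_general htrans
end

section
/- The polynomial p = X⁴ − 4X² + t is irreducible over the field K = ℂ(t) of rational functions in one variable over the complex numbers. -/
/-!
As a polynomial in `t` over `ℂ[X]`, `X⁴ - 4X² + t` is linear and monic, hence irreducible in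
`ℂ[t][X] ≅ ℂ[X][t]`. Being monic in `X`, it stays irreducible over the fraction field `ℂ(t)` by
Gauss's lemma.
-/

open Polynomial Polynomial.Bivariate

theorem irreducible_map_C_add_C_X {R : Type*} [CommRing R] [IsDomain R] (q : R[X]) :
    Irreducible (q.map C + C X : R[X][Y]) := by
  have hlinear : Irreducible (Y + C q : R[X][Y]) :=
    (monic_X_add_C q).irreducible_of_degree_eq_one (degree_X_add_C q)
  rw [← MulEquiv.irreducible_iff (swap (R := R))]
  simpa [swap_map_C, swap_X, add_comm] using hlinear

theorem irreducible_map_ratFunc_add_C_X {k : Type*} [Field k] {q : k[X]} (hq : q.Monic)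
    (hdeg : 0 < q.natDegree) :
    Irreducible (q.map (algebraMap k (RatFunc k)) + C RatFunc.X) := by
  have hmonic : (q.map C + C X : k[X][Y]).Monic := by
    refine (hq.map C).add_of_left (degree_C_le.trans_lt ?_)
    rwa [degree_map_eq_of_injective C_injective, ← natDegree_pos_iff_degree_pos]
  have hirr := (hmonic.irreducible_iff_irreducible_map_fraction_map (K := RatFunc k)).mp
    (irreducible_map_C_add_C_X q)
  simpa [Polynomial.map_map, RatFunc.algebraMap_X] using hirr

/-- The polynomial `X⁴ - 4X² + t` is irreducible over the field `ℂ(t)` of rational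
functions over the complex numbers. -/
theorem X_pow_four_sub_four_X_sq_add_t_irreducible :
    Irreducible
      (X ^ 4 - C 4 * X ^ 2 + C (RatFunc.X : RatFunc ℂ) : (RatFunc ℂ)[X]) := by
  have hmonic : (X ^ 4 - C 4 * X ^ 2 : ℂ[X]).Monic := by monicity!
  have hdeg : (X ^ 4 - C 4 * X ^ 2 : ℂ[X]).natDegree = 4 := by compute_degree!
  simpa [map_ofNat] using irreducible_map_ratFunc_add_C_X hmonic (by omega)
end

section
/- Let L be the splitting field of the polynomial p = X⁴ − 4X² + t over the field K = ℂ(t) of rational functions. Then the Galois group of L over K (the group of K-algebra automorphisms of L) has exactly 8 elements. -/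
/-!
Write `t = 4x² - x⁴`, so that `ℂ(t) ⊆ ℂ(x)` and `x` is a root of `p`; this extension has degree
`max (deg num, deg denom) = 4`. Since `p = X⁴ - (x² + y²) X² + x² y²` with `y² = 4 - x²`, the
roots of `p` are `±x, ±y`, and the splitting field is `ℂ(x)(y)`. As `4 - x² = (2 - x)(2 + x)` is
squarefree in `ℂ[x]`, it is not a square in `ℂ(x)`, so the splitting field has degree `4 · 2 = 8`
over `ℂ(t)`, which is the order of the Galois group in characteristic zero.
-/

open Polynomial IntermediateField

lemma biquadratic_eq_prod {R : Type*} [CommRing R] (x y : R) :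
    (X ^ 4 - C (x ^ 2 + y ^ 2) * X ^ 2 + C (x ^ 2 * y ^ 2) : R[X]) =
      (X - C x) * (X - C (-x)) * (X - C y) * (X - C (-y)) := by
  simp only [map_add, map_mul, map_pow, map_neg]
  ring

lemma not_isSquare_algebraMap_of_squarefree {R F : Type*} [CommRing R] [IsDomain R]
    [IsIntegrallyClosed R] [Field F] [Algebra R F] [IsFractionRing R F] {r : R}
    (hr : Squarefree r) (hu : ¬IsUnit r) : ¬IsSquare (algebraMap R F r) := by
  rintro ⟨u, hru⟩
  obtain ⟨s, rfl⟩ := IsIntegrallyClosed.exists_algebraMap_eq_of_isIntegral_pow (R := R) (x := u)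
    two_pos (by rw [sq, ← hru]; exact isIntegral_algebraMap)
  rw [← map_mul, (IsFractionRing.injective R F).eq_iff] at hru
  subst hru
  have hs : IsUnit s := hr s dvd_rfl
  exact hu (hs.mul hs)

lemma adjoin_eq_top_of_range_algebraMap_eq {K E M : Type*} [Field K] [Field E] [Field M]
    [Algebra K M] [Algebra E M] (h : Set.range (algebraMap K M) = Set.range (algebraMap E M))
    {S : Set M} (hS : adjoin E S = ⊤) : adjoin K S = ⊤ := by
  apply toSubfield_injective
  rw [top_toSubfield, ← top_toSubfield (F := E), ← hS, adjoin_toSubfield, adjoin_toSubfield, h]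

lemma adjoin_algebraMap_pair_eq_top {K M N : Type*} [Field K] [Field M] [Field N] [Algebra K M]
    [Algebra K N] [Algebra M N] [IsScalarTower K M N] {x : M} {y : N} (hx : K⟮x⟯ = ⊤)
    (hy : M⟮y⟯ = ⊤) : K⟮algebraMap M N x, y⟯ = ⊤ := by
  set T := K⟮algebraMap M N x, y⟯
  have hM : ∀ m : M, algebraMap M N m ∈ T := by
    have : K⟮x⟯ ≤ T.comap (IsScalarTower.toAlgHom K M N) :=
      adjoin_simple_le_iff.mpr (subset_adjoin _ _ (Set.mem_insert _ _))
    exact fun m ↦ (hx ▸ this) trivial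
  rw [eq_top_iff]
  intro n _
  have hn : n ∈ (M⟮y⟯).toSubfield := hy ▸ trivial
  rw [adjoin_toSubfield] at hn
  refine Subfield.closure_le.mpr (Set.union_subset ?_ ?_) hn
  · rintro _ ⟨m, rfl⟩
    exact hM m
  · exact Set.singleton_subset_iff.mpr (subset_adjoin K _ (Set.mem_insert_of_mem _ rfl))

lemma finrank_adjoinRoot_X_sq_sub_C {M : Type*} [Field M] (c : M) :
    Module.finrank M (AdjoinRoot (X ^ 2 - C c)) = 2 := by
  rw [(AdjoinRoot.powerBasis (X_pow_sub_C_ne_zero two_pos c)).finrank, AdjoinRoot.powerBasis_dim,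
    natDegree_X_pow_sub_C]

section Biquadratic

variable {K M : Type*} [Field K] [Field M] [Algebra K M] {a b : K} {x : M}

lemma map_biquadratic_adjoinRoot_eq_prod (hroot : aeval x (X ^ 4 - C a * X ^ 2 + C b) = 0) :
    (X ^ 4 - C a * X ^ 2 + C b).map
        (algebraMap K (AdjoinRoot (X ^ 2 - C (algebraMap K M a - x ^ 2)))) =
      (X - C (algebraMap M _ x)) * (X - C (-algebraMap M _ x)) *
        (X - C (AdjoinRoot.root _)) * (X - C (-AdjoinRoot.root _)) := by
  set q := X ^ 2 - C (algebraMap K M a - x ^ 2)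
  set x' := algebraMap M (AdjoinRoot q) x
  set y := AdjoinRoot.root q
  have hy : y ^ 2 = algebraMap K _ a - x' ^ 2 := by
    have h : aeval y q = 0 := by rw [AdjoinRoot.aeval_eq, AdjoinRoot.mk_self]
    simp only [q, map_sub, map_pow, aeval_X, aeval_C] at h
    rw [IsScalarTower.algebraMap_apply K M]
    linear_combination h
  have hb : algebraMap K _ b = x' ^ 2 * y ^ 2 := by
    have h := congrArg (algebraMap M (AdjoinRoot q)) hroot
    simp only [map_add, map_sub, map_mul, map_pow, aeval_X, aeval_C, map_zero] at h
    rw [← IsScalarTower.algebraMap_apply, ← IsScalarTower.algebraMap_apply] at h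
    linear_combination h - x' ^ 2 * hy
  rw [← biquadratic_eq_prod, ← hb, hy, add_sub_cancel]
  simp

theorem isSplittingField_adjoinRoot_biquadratic (hx : K⟮x⟯ = ⊤)
    (hroot : aeval x (X ^ 4 - C a * X ^ 2 + C b) = 0)
    [Fact (Irreducible (X ^ 2 - C (algebraMap K M a - x ^ 2)))] :
    IsSplittingField K (AdjoinRoot (X ^ 2 - C (algebraMap K M a - x ^ 2)))
      (X ^ 4 - C a * X ^ 2 + C b) := by
  have hmap := map_biquadratic_adjoinRoot_eq_prod hroot
  have hp : (X ^ 4 - C a * X ^ 2 + C b).map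
      (algebraMap K (AdjoinRoot (X ^ 2 - C (algebraMap K M a - x ^ 2)))) ≠ 0 := by
    rw [hmap]
    simp only [ne_eq, mul_eq_zero, X_sub_C_ne_zero, or_self, not_false_eq_true]
  refine isSplittingField_iff_intermediateField.mpr ⟨?_, ?_⟩
  · rw [hmap]
    exact (((Splits.X_sub_C _).mul (Splits.X_sub_C _)).mul (Splits.X_sub_C _)).mul
      (Splits.X_sub_C _)
  rw [eq_top_iff, ← adjoin_algebraMap_pair_eq_top hx (adjoin_root_eq_top _)]
  refine adjoin.mono _ _ _ (Set.insert_subset_iff.mpr ⟨?_, Set.singleton_subset_iff.mpr ?_⟩)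
  all_goals
    refine mem_rootSet'.mpr ⟨hp, ?_⟩
    rw [aeval_def, eval₂_eq_eval_map, hmap]
    simp

theorem finrank_splittingField_biquadratic (hx : K⟮x⟯ = ⊤)
    (hroot : aeval x (X ^ 4 - C a * X ^ 2 + C b) = 0)
    (hc : ∀ y : M, y ^ 2 ≠ algebraMap K M a - x ^ 2) :
    Module.finrank K (X ^ 4 - C a * X ^ 2 + C b).SplittingField = Module.finrank K M * 2 := by
  have := Fact.mk (X_pow_sub_C_irreducible_of_prime Nat.prime_two hc)
  have := isSplittingField_adjoinRoot_biquadratic hx hroot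
  rw [← (IsSplittingField.algEquiv (AdjoinRoot (X ^ 2 - C (algebraMap K M a - x ^ 2))) _)
    |>.toLinearEquiv.finrank_eq, ← Module.finrank_mul_finrank K M, finrank_adjoinRoot_X_sq_sub_C]

end Biquadratic

/-- The value of `t` in `ℂ(x)` that makes `x` a root of `X⁴ - 4X² + t`. -/
noncomputable def quarticParam : RatFunc ℂ :=
  algebraMap ℂ[X] (RatFunc ℂ) (4 * X ^ 2 - X ^ 4)

lemma natDegree_four_mul_X_sq_sub_X_pow_four : (4 * X ^ 2 - X ^ 4 : ℂ[X]).natDegree = 4 := by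
  compute_degree!

lemma transcendental_quarticParam : Transcendental ℂ quarticParam :=
  (transcendental_algebraMap_iff (RatFunc.algebraMap_injective ℂ)).mpr <|
    Polynomial.transcendental _ (by rw [natDegree_four_mul_X_sq_sub_X_pow_four]; decide) <|
      mem_nonZeroDivisors_of_ne_zero <| leadingCoeff_ne_zero.mpr <|
        ne_zero_of_natDegree_gt (n := 0) (by rw [natDegree_four_mul_X_sq_sub_X_pow_four]; decide)

lemma finrank_adjoin_quarticParam : Module.finrank ℂ⟮quarticParam⟯ (RatFunc ℂ) = 4 := by
  rw [RatFunc.finrank_eq_max_natDegree, quarticParam, RatFunc.num_algebraMap,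
    RatFunc.denom_algebraMap, natDegree_four_mul_X_sq_sub_X_pow_four, natDegree_one]
  rfl

/-- `ℂ(x)` as a `ℂ(t)`-algebra via `t ↦ 4x² - x⁴`. It is a type synonym because `RatFunc ℂ` is
already an algebra over itself. -/
def QuarticRootField : Type := RatFunc ℂ

noncomputable instance : Field QuarticRootField := inferInstanceAs (Field (RatFunc ℂ))

noncomputable instance : Algebra ℂ⟮quarticParam⟯ QuarticRootField :=
  inferInstanceAs (Algebra ℂ⟮quarticParam⟯ (RatFunc ℂ))

noncomputable instance : Algebra (RatFunc ℂ) QuarticRootField :=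
  ((algebraMap ℂ⟮quarticParam⟯ QuarticRootField).comp
    (RatFunc.algEquivOfTranscendental _ transcendental_quarticParam).toRingHom).toAlgebra

noncomputable def quarticRoot : QuarticRootField := (RatFunc.X : RatFunc ℂ)

lemma algebraMap_ratFunc_X :
    algebraMap (RatFunc ℂ) QuarticRootField RatFunc.X = 4 * quarticRoot ^ 2 - quarticRoot ^ 4 := by
  show (RatFunc.algEquivOfTranscendental _ transcendental_quarticParam RatFunc.X : RatFunc ℂ) = _
  rw [RatFunc.algEquivOfTranscendental_X, quarticParam, map_sub, map_mul, map_pow, map_pow,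
    map_ofNat, RatFunc.algebraMap_X]
  rfl

lemma aeval_quarticRoot :
    aeval quarticRoot (X ^ 4 - C 4 * X ^ 2 + C (RatFunc.X : RatFunc ℂ)) = 0 := by
  simp only [map_add, map_sub, map_mul, map_pow, aeval_X, aeval_C, algebraMap_ratFunc_X, map_ofNat]
  ring

lemma finrank_quarticRootField : Module.finrank (RatFunc ℂ) QuarticRootField = 4 := by
  rw [← finrank_adjoin_quarticParam]
  exact Algebra.finrank_eq_of_equiv_equiv (S₀ := QuarticRootField) (S₁ := RatFunc ℂ)
    (RatFunc.algEquivOfTranscendental _ transcendental_quarticParam).toRingEquiv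
    (RingEquiv.refl (RatFunc ℂ)) (RingHom.ext fun _ ↦ rfl)

lemma adjoin_quarticRoot_eq_top : (RatFunc ℂ)⟮quarticRoot⟯ = ⊤ := by
  refine adjoin_eq_top_of_range_algebraMap_eq (E := ℂ⟮quarticParam⟯) ?_
    (RatFunc.IntermediateField.adjoin_X _)
  exact (RatFunc.algEquivOfTranscendental _ transcendental_quarticParam).surjective.range_comp
    (algebraMap ℂ⟮quarticParam⟯ QuarticRootField)

lemma not_isSquare_four_sub_X_sq : ¬IsSquare (4 - RatFunc.X ^ 2 : RatFunc ℂ) := by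
  have h : (4 - RatFunc.X ^ 2 : RatFunc ℂ) = algebraMap ℂ[X] (RatFunc ℂ) (-(X ^ 2 - C 4)) := by
    rw [map_neg, map_sub, map_pow, RatFunc.algebraMap_X, RatFunc.algebraMap_C, map_ofNat, neg_sub]
  rw [h]
  refine not_isSquare_algebraMap_of_squarefree ?_ fun hu ↦ ?_
  · exact (Associated.refl _).neg_left.squarefree_iff.mpr
      (separable_X_pow_sub_C 4 (by norm_num) (by norm_num)).squarefree
  · have := natDegree_eq_zero_of_isUnit hu
    rw [natDegree_neg, natDegree_X_pow_sub_C] at this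
    exact two_ne_zero this

lemma sq_ne_four_sub_quarticRoot_sq (y : QuarticRootField) :
    y ^ 2 ≠ algebraMap (RatFunc ℂ) QuarticRootField 4 - quarticRoot ^ 2 := by
  rw [map_ofNat]
  exact fun h ↦ not_isSquare_four_sub_X_sq ⟨show RatFunc ℂ from y, h.symm.trans (sq y)⟩

/-- The Galois group of the splitting field of `X⁴ - 4X² + t` over `ℂ(t)`
has exactly 8 elements. -/
theorem galois_group_of_quartic_has_card_eight :
    Nat.card
      ((X ^ 4 - C 4 * X ^ 2 + C (RatFunc.X : RatFunc ℂ) : (RatFunc ℂ)[X]).SplittingField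
        ≃ₐ[RatFunc ℂ]
       (X ^ 4 - C 4 * X ^ 2 + C (RatFunc.X : RatFunc ℂ) : (RatFunc ℂ)[X]).SplittingField)
      = 8 := by
  have : IsGalois (RatFunc ℂ)
      (X ^ 4 - C 4 * X ^ 2 + C (RatFunc.X : RatFunc ℂ) : (RatFunc ℂ)[X]).SplittingField := ⟨⟩
  rw [IsGalois.card_aut_eq_finrank, finrank_splittingField_biquadratic adjoin_quarticRoot_eq_top
    aeval_quarticRoot sq_ne_four_sub_quarticRoot_sq, finrank_quarticRootField]
end

section
/- Let F : ℂⁿ → ℂⁿ be a twice continuously (complex-)differentiable map, let x* be a zero of F at which the derivative of F is an invertible linear map, and define the Newton iteration N_F(x) = x − (DF(x))⁻¹(F(x)). Then there exists ε > 0 such that for every x with ‖x − x*‖ < ε, the sequence defined by x₀ = x and x_{i+1} = N_F(x_i) satisfies ‖x* − x_i‖ ≤ 2^{1−2^i} · ‖x* − x‖ for all i ≥ 0. -/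
/-!
Writing `N` for the Newton map, `x* - N y = -(DF y)⁻¹ (F x* - F y - DF y (x* - y))`. Near `x*` the
derivative is invertible with bounded inverse and is Lipschitz, so the Taylor remainder is
`O(‖x* - y‖²)` and `‖x* - N y‖ ≤ K ‖x* - y‖²`. If `K ‖x* - x‖ ≤ 1/2`, the bound
`e_i ≤ a_i e_0` with `a_i = 2^(1 - 2^i)` propagates since `K (a_i e_0)² ≤ a_i² e_0 / 2 = a_{i+1} e_0`.
-/

open Filter Topology Metric
open scoped NNReal

/-- Where `fderiv 𝕜 F y` is not invertible, `ContinuousLinearMap.inverse` returns `0`, so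
`newtonMap 𝕜 F y = y` there. -/
noncomputable def newtonMap (𝕜 : Type*) {E : Type*} [NontriviallyNormedField 𝕜]
    [NormedAddCommGroup E] [NormedSpace 𝕜 E] (F : E → E) (y : E) : E :=
  y - (fderiv 𝕜 F y).inverse (F y)

theorem two_zpow_one_sub_two_pow_succ (i : ℕ) :
    (2 : ℝ) ^ ((1 : ℤ) - 2 ^ (i + 1)) = ((2 : ℝ) ^ ((1 : ℤ) - 2 ^ i)) ^ 2 / 2 := by
  rw [eq_div_iff two_ne_zero, ← zpow_natCast, ← zpow_mul, ← zpow_add_one₀ two_ne_zero]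
  congr 1
  push_cast
  ring

theorem two_zpow_one_sub_two_pow_le_one (i : ℕ) : (2 : ℝ) ^ ((1 : ℤ) - 2 ^ i) ≤ 1 :=
  zpow_le_one_of_nonpos₀ one_le_two (sub_nonpos.mpr (one_le_pow₀ one_le_two))

theorem dist_iterate_le_two_zpow_mul {X : Type*} [PseudoMetricSpace X] {f : X → X} {xs x : X}
    {r K : ℝ} (hK : 0 ≤ K) (hf : ∀ y, dist xs y ≤ r → dist xs (f y) ≤ K * dist xs y ^ 2)
    (hxr : dist xs x ≤ r) (hKx : K * dist xs x ≤ 1 / 2) (i : ℕ) :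
    dist xs (f^[i] x) ≤ (2 : ℝ) ^ ((1 : ℤ) - 2 ^ i) * dist xs x := by
  induction i with
  | zero => norm_num
  | succ i ih =>
    set a := (2 : ℝ) ^ ((1 : ℤ) - 2 ^ i)
    have hle : dist xs (f^[i] x) ≤ dist xs x :=
      ih.trans (mul_le_of_le_one_left dist_nonneg (two_zpow_one_sub_two_pow_le_one i))
    rw [Function.iterate_succ_apply', two_zpow_one_sub_two_pow_succ]
    calc dist xs (f (f^[i] x)) ≤ K * dist xs (f^[i] x) ^ 2 := hf _ (hle.trans hxr)
      _ ≤ K * (a * dist xs x) ^ 2 := by gcongr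
      _ = (K * dist xs x) * (a ^ 2 * dist xs x) := by ring
      _ ≤ 1 / 2 * (a ^ 2 * dist xs x) := by gcongr
      _ = a ^ 2 / 2 * dist xs x := by ring

theorem ContinuousAt.eventually_isUnit_and_norm_ringInverse_lt {R X : Type*} [NormedRing R]
    [HasSummableGeomSeries R] [TopologicalSpace X] {f : X → R} {x : X} (hf : ContinuousAt f x)
    (hx : IsUnit (f x)) {M : ℝ} (hM : ‖Ring.inverse (f x)‖ < M) :
    ∀ᶠ y in 𝓝 x, IsUnit (f y) ∧ ‖Ring.inverse (f y)‖ < M := by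
  have hinv : ContinuousAt (fun y => Ring.inverse (f y)) x :=
    (hx.unit_spec ▸ NormedRing.inverse_continuousAt hx.unit).comp hf
  exact (hf.eventually_mem (Units.isOpen.mem_nhds hx)).and
    (hinv.norm.eventually (gt_mem_nhds hM))

section Newton

variable {𝕜 E G : Type*} [RCLike 𝕜] [NormedAddCommGroup E] [NormedSpace 𝕜 E]
  [NormedAddCommGroup G] [NormedSpace 𝕜 G]

theorem norm_image_sub_sub_fderiv_le_of_lipschitzOnWith {F : E → G} {L : ℝ≥0} {x y : E}
    (hF : ∀ z ∈ closedBall y ‖x - y‖, DifferentiableAt 𝕜 F z)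
    (hlip : LipschitzOnWith L (fderiv 𝕜 F) (closedBall y ‖x - y‖)) :
    ‖F x - F y - fderiv 𝕜 F y (x - y)‖ ≤ L * ‖x - y‖ ^ 2 := by
  let : NormedSpace ℝ E := .restrictScalars ℝ 𝕜 E
  have hy : y ∈ closedBall y ‖x - y‖ := mem_closedBall_self (norm_nonneg _)
  have hx : x ∈ closedBall y ‖x - y‖ := by rw [mem_closedBall, dist_eq_norm]
  have bound : ∀ z ∈ closedBall y ‖x - y‖, ‖fderiv 𝕜 F z - fderiv 𝕜 F y‖ ≤ L * ‖x - y‖ := by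
    intro z hz
    rw [← dist_eq_norm]
    exact (hlip.dist_le_mul z hz y hy).trans (by gcongr; exact hz)
  calc ‖F x - F y - fderiv 𝕜 F y (x - y)‖ ≤ L * ‖x - y‖ * ‖x - y‖ :=
        (convex_closedBall y _).norm_image_sub_le_of_norm_fderiv_le' hF bound hy hx
    _ = L * ‖x - y‖ ^ 2 := by ring

theorem sub_newtonMap_eq {F : E → E} {xs y : E} (hxs : F xs = 0) (hy : IsUnit (fderiv 𝕜 F y)) :
    xs - newtonMap 𝕜 F y =
      -(fderiv 𝕜 F y).inverse (F xs - F y - fderiv 𝕜 F y (xs - y)) := by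
  obtain ⟨u, hu⟩ := hy
  have hinv : (fderiv 𝕜 F y).inverse = ↑u⁻¹ := by
    rw [← ContinuousLinearMap.ringInverse_eq_inverse, ← hu, Ring.inverse_unit]
  have hcancel (v : E) : (↑u⁻¹ : E →L[𝕜] E) ((u : E →L[𝕜] E) v) = v :=
    congr($(u.inv_mul) v)
  rw [newtonMap, hinv, hxs, ← hu, map_sub, map_sub, hcancel, map_zero]
  abel

theorem exists_dist_newtonMap_le_mul_sq [CompleteSpace E] {F : E → E} {xs : E}
    (hF : ContDiffAt 𝕜 2 F xs) (hxs : F xs = 0) (hinv : IsUnit (fderiv 𝕜 F xs)) :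
    ∃ r > 0, ∃ K ≥ 0, ∀ y, dist xs y ≤ r → dist xs (newtonMap 𝕜 F y) ≤ K * dist xs y ^ 2 := by
  have hF' : ContDiffAt 𝕜 1 (fderiv 𝕜 F) xs := hF.fderiv_right (by norm_num)
  obtain ⟨L, t, ht, hlip⟩ := hF'.exists_lipschitzOnWith
  have hdiff : ∀ᶠ y in 𝓝 xs, DifferentiableAt 𝕜 F y :=
    (hF.eventually (by simp)).mono fun y hy => hy.differentiableAt (by norm_num)
  have hunit := hF'.continuousAt.eventually_isUnit_and_norm_ringInverse_lt hinv (lt_add_one _)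
  rw [ContinuousLinearMap.ringInverse_eq_inverse] at hunit
  set M := ‖(fderiv 𝕜 F xs).inverse‖ + 1
  obtain ⟨ρ, hρ, hball⟩ :=
    nhds_basis_closedBall.mem_iff.mp (inter_mem (inter_mem hdiff hunit) ht)
  refine ⟨ρ / 2, by positivity, M * L, by positivity, fun y hy => ?_⟩
  have hsub : closedBall y ‖xs - y‖ ⊆ closedBall xs ρ := by
    refine closedBall_subset_closedBall' ?_
    rw [← dist_eq_norm, dist_comm y xs]
    linarith
  obtain ⟨⟨-, hyU, hyM⟩, -⟩ := hball (hsub (mem_closedBall_self (norm_nonneg _)))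
  have htaylor := norm_image_sub_sub_fderiv_le_of_lipschitzOnWith
    (fun z hz => (hball (hsub hz)).1.1) (hlip.mono fun z hz => (hball (hsub hz)).2)
  rw [dist_eq_norm, dist_eq_norm, sub_newtonMap_eq hxs hyU, norm_neg]
  calc _ ≤ ‖(fderiv 𝕜 F y).inverse‖ * ‖F xs - F y - fderiv 𝕜 F y (xs - y)‖ :=
        ContinuousLinearMap.le_opNorm _ _
    _ ≤ M * (L * ‖xs - y‖ ^ 2) := by gcongr
    _ = M * L * ‖xs - y‖ ^ 2 := by ring

end Newton

/-- **Local quadratic convergence of Newton's method.**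
If `F : ℂⁿ → ℂⁿ` is twice continuously differentiable, `F x* = 0`, and the derivative
of `F` at `x*` is invertible, then there is `ε > 0` such that for every starting point
`x` with `‖x - x*‖ < ε`, the Newton iterates `x₀ = x`, `x_{i+1} = x_i - (DF(x_i))⁻¹ F(x_i)`
satisfy `‖x* - x_i‖ ≤ 2^(1 - 2^i) * ‖x* - x‖` for all `i`. -/
theorem newton_iteration_quadratic_convergence {n : ℕ}
    (F : EuclideanSpace ℂ (Fin n) → EuclideanSpace ℂ (Fin n))
    (hF : ContDiff ℂ 2 F) (xs : EuclideanSpace ℂ (Fin n)) (hxs : F xs = 0)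
    (hinv : IsUnit (fderiv ℂ F xs)) :
    ∃ ε > (0 : ℝ), ∀ x : EuclideanSpace ℂ (Fin n), ‖x - xs‖ < ε →
      ∀ i : ℕ,
        ‖xs - (fun y => y - (fderiv ℂ F y).inverse (F y))^[i] x‖ ≤
          (2 : ℝ) ^ ((1 : ℤ) - 2 ^ i) * ‖xs - x‖ := by
  obtain ⟨r, hr, K, hK, hnewton⟩ := exists_dist_newtonMap_le_mul_sq hF.contDiffAt hxs hinv
  refine ⟨min r (1 / (2 * (K + 1))), by positivity, fun x hx i => ?_⟩
  rw [← dist_eq_norm, dist_comm, lt_min_iff] at hx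
  have hKx : K * dist xs x ≤ 1 / 2 := by
    rw [lt_div_iff₀ (by positivity)] at hx
    nlinarith [dist_nonneg (x := xs) (y := x)]
  have hdist := dist_iterate_le_two_zpow_mul hK hnewton hx.1.le hKx i
  rwa [dist_eq_norm, dist_eq_norm] at hdist
end

section
/- Let f : E → B be a covering map of topological spaces and let b ∈ B. Then there exists a group homomorphism h from the fundamental group π₁(B, b) to the group of permutations of the fiber f⁻¹({b}) such that for every loop γ at b, every point v of the fiber, and every path δ in E starting at v that lifts γ (i.e., f ∘ δ = γ), the permutation h([γ]) sends v to the endpoint δ(1) of the lift. (The image of h is the monodromy group of the cover.) -/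
theorem IsCoveringMap.monodromy_mk_eq_of_lifts {E X : Type*} [TopologicalSpace E]
    [TopologicalSpace X] {p : E → X} (cov : IsCoveringMap p) {x y : X} (γ : Path x y)
    (v : p ⁻¹' {x}) (w : p ⁻¹' {y}) (δ : Path (v : E) (w : E)) (hδ : ∀ s, p (δ s) = γ s) :
    cov.monodromy ⟦γ⟧ v = w := by
  have hδ_eq : δ.toContinuousMap = cov.liftPath γ v (γ.source.trans v.2.symm) :=
    (cov.eq_liftPath_iff' _).mpr ⟨funext hδ, δ.source⟩
  exact Subtype.ext (congr($hδ_eq.symm 1).trans δ.target)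

/-- For a covering map `f : E → B` and a point `b : B`, there is a group homomorphism
from the fundamental group `π₁(B, b)` to the permutations of the fiber `f ⁻¹' {b}`
such that the class of a loop `γ` sends a point `v` of the fiber to the endpoint of
any lift of `γ` starting at `v`. Its image is the monodromy group of the cover. -/
theorem exists_monodromy_homomorphism {E B : Type*} [TopologicalSpace E]
    [TopologicalSpace B] (f : E → B) (hf : IsCoveringMap f) (b : B) :
    ∃ h : FundamentalGroup B b →* Equiv.Perm (f ⁻¹' {b}),
      ∀ (γ : Path b b) (v w : f ⁻¹' {b}) (δ : Path (v : E) (w : E)),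
        (∀ s, f (δ s) = γ s) →
        h (@FundamentalGroup.fromPath (TopCat.of B) _ b ⟦γ⟧) v = w :=
  ⟨hf.monodromyPerm b, fun γ v w δ hδ => hf.monodromy_mk_eq_of_lifts γ v w δ hδ⟩
end

section
/- In the combinatorial model of the 27 lines on a smooth cubic surface, for every pair of lines λ and μ that meet each other, there is exactly one line ν, distinct from λ and μ, that meets both λ and μ. (Equivalently, each line λ forms exactly five triangles with the ten lines that meet it.) -/
/-- The 27 lines on a smooth cubic surface, modeled combinatorially: the six
exceptional lines `p̂ᵢ`, the fifteen proper transforms `ℓ̂_S` of lines through pairs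
`S` of blown-up points, and the six proper transforms `Ĉᵢ` of conics through the
five points other than `pᵢ`. -/
abbrev CubicSurfaceLine : Type :=
  Fin 6 ⊕ ({S : Finset (Fin 6) // S.card = 2} ⊕ Fin 6)

/-- The incidence ("meets") relation among the 27 lines: `p̂ᵢ` meets `ℓ̂_S` iff `i ∈ S`;
`p̂ᵢ` meets `Ĉⱼ` iff `i ≠ j`; `ℓ̂_S` meets `ℓ̂_T` iff `S ∩ T = ∅`; `ℓ̂_S` meets `Ĉᵢ` iff
`i ∈ S`; no two distinct `p̂`'s meet; no two distinct `Ĉ`'s meet; no line meets itself. -/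
def meets : CubicSurfaceLine → CubicSurfaceLine → Prop
  | .inl _, .inl _ => False
  | .inl i, .inr (.inl S) => i ∈ S.1
  | .inl i, .inr (.inr j) => i ≠ j
  | .inr (.inl S), .inl i => i ∈ S.1
  | .inr (.inl S), .inr (.inl T) => S.1 ∩ T.1 = ∅
  | .inr (.inl S), .inr (.inr i) => i ∈ S.1
  | .inr (.inr i), .inl j => i ≠ j
  | .inr (.inr i), .inr (.inl S) => i ∈ S.1
  | .inr (.inr _), .inr (.inr _) => False

instance : DecidableRel meets := fun a b =>
  match a, b with
  | .inl _, .inl _ => inferInstanceAs (Decidable False)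
  | .inl i, .inr (.inl S) => inferInstanceAs (Decidable (i ∈ S.1))
  | .inl i, .inr (.inr j) => inferInstanceAs (Decidable (i ≠ j))
  | .inr (.inl S), .inl i => inferInstanceAs (Decidable (i ∈ S.1))
  | .inr (.inl S), .inr (.inl T) => inferInstanceAs (Decidable (S.1 ∩ T.1 = ∅))
  | .inr (.inl S), .inr (.inr i) => inferInstanceAs (Decidable (i ∈ S.1))
  | .inr (.inr i), .inl j => inferInstanceAs (Decidable (i ≠ j))
  | .inr (.inr i), .inr (.inl S) => inferInstanceAs (Decidable (i ∈ S.1))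
  | .inr (.inr _), .inr (.inr _) => inferInstanceAs (Decidable False)

theorem meets_symm : ∀ a b : CubicSurfaceLine, meets a b → meets b a := by
  rintro (i | S | i) (j | T | j) h <;>
    simp_all [meets, Finset.inter_comm, ne_comm]

theorem meets_irrefl : ∀ a : CubicSurfaceLine, ¬ meets a a := by decide

/-! Sort the two meeting lines by type. Up to swapping them there are four cases, and in each
the third line is explicit: `p̂ᵢ, ℓ̂_{ij}` meet `Ĉⱼ`; `p̂ᵢ, Ĉⱼ` meet `ℓ̂_{ij}`; disjoint
`ℓ̂_S, ℓ̂_T` meet `ℓ̂_U` with `U` the two points outside `S ∪ T`; `ℓ̂_{ij}, Ĉᵢ` meet `p̂ⱼ`.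
Checking that no other line meets both only uses that a 2-subset of `Fin 6` is determined by two
of its points, or by a disjoint 4-subset. -/

open Finset

theorem Finset.exists_eq_pair_of_mem_of_card_eq_two {α : Type*} [DecidableEq α] {s : Finset α}
    (hs : #s = 2) {a : α} (ha : a ∈ s) : ∃ b, a ≠ b ∧ s = {a, b} := by
  obtain ⟨b, hb⟩ := card_eq_one.1 (by rw [card_erase_of_mem ha, hs] : #(s.erase a) = 1)
  refine ⟨b, fun hab => ?_, ?_⟩
  · simpa [hab] using hb.ge (mem_singleton_self b)
  · rw [← insert_erase ha, hb]

theorem Finset.pair_subset_iff_eq_of_card_eq_two {α : Type*} [DecidableEq α] {s : Finset α}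
    (hs : #s = 2) {a b : α} (hab : a ≠ b) : {a, b} ⊆ s ↔ s = {a, b} :=
  ⟨fun h => (eq_of_subset_of_card_le h (by rw [hs, card_pair hab])).symm, fun h => h.ge⟩

theorem ne_of_meets {l n : CubicSurfaceLine} (h : meets n l) : n ≠ l :=
  fun hnl => meets_irrefl l (hnl ▸ h)

def IsThirdLine (l m w : CubicSurfaceLine) : Prop :=
  ∀ n, meets n l ∧ meets n m ↔ n = w

theorem IsThirdLine.symm {l m w : CubicSurfaceLine} (h : IsThirdLine l m w) :
    IsThirdLine m l w :=
  fun n => and_comm.trans (h n)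

theorem isThirdLine_exceptional_line {i j : Fin 6} (hij : i ≠ j)
    {S : {S : Finset (Fin 6) // #S = 2}} (hS : S.1 = {i, j}) :
    IsThirdLine (.inl i) (.inr (.inl S)) (.inr (.inr j)) := by
  rintro (k | T | k) <;>
    simp only [meets, ← disjoint_iff_inter_eq_empty, Sum.inr.injEq, reduceCtorEq, iff_false,
      not_and, false_implies]
  · exact fun hiT hTS => disjoint_left.1 hTS hiT (hS ▸ mem_insert_self i {j})
  · rw [hS, mem_insert, mem_singleton]
    exact ⟨fun ⟨hki, hk⟩ => hk.resolve_left hki, fun hkj => ⟨hkj ▸ hij.symm, Or.inr hkj⟩⟩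

theorem isThirdLine_exceptional_conic {i j : Fin 6} (hij : i ≠ j) :
    IsThirdLine (.inl i) (.inr (.inr j)) (.inr (.inl ⟨{i, j}, card_pair hij⟩)) := by
  rintro (k | T | k) <;>
    simp only [meets, Sum.inr.injEq, Sum.inl.injEq, Subtype.ext_iff, reduceCtorEq, iff_false,
      not_and, false_implies, not_false_eq_true, implies_true]
  rw [← pair_subset_iff_eq_of_card_eq_two T.2 hij, insert_subset_iff, singleton_subset_iff]

theorem isThirdLine_line_line {S T : {S : Finset (Fin 6) // #S = 2}} (hST : Disjoint S.1 T.1) :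
    IsThirdLine (.inr (.inl S)) (.inr (.inl T))
      (.inr (.inl ⟨(S.1 ∪ T.1)ᶜ, by
        rw [card_compl, card_union_of_disjoint hST, S.2, T.2]; rfl⟩)) := by
  rintro (k | V | k) <;>
    simp only [meets, ← disjoint_iff_inter_eq_empty, Sum.inr.injEq, Sum.inl.injEq,
      Subtype.ext_iff, reduceCtorEq, iff_false, not_and]
  · exact fun hkS => disjoint_left.1 hST hkS
  · rw [← disjoint_union_right]
    refine ⟨fun hV => (compl_eq_of_disjoint_of_card_add_eq hV.symm ?_).symm,
      fun hV => hV ▸ disjoint_compl_left⟩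
    rw [card_union_of_disjoint hST, S.2, T.2, V.2]
    rfl
  · exact fun hkS => disjoint_left.1 hST hkS

theorem isThirdLine_line_conic {i j : Fin 6} (hij : i ≠ j)
    {S : {S : Finset (Fin 6) // #S = 2}} (hS : S.1 = {i, j}) :
    IsThirdLine (.inr (.inl S)) (.inr (.inr i)) (.inl j) := by
  rintro (k | T | k) <;>
    simp only [meets, ← disjoint_iff_inter_eq_empty, Sum.inl.injEq, reduceCtorEq, iff_false,
      not_and, not_false_eq_true, implies_true]
  · rw [hS, mem_insert, mem_singleton]
    exact ⟨fun ⟨hk, hki⟩ => hk.resolve_left hki, fun hkj => ⟨Or.inr hkj, hkj ▸ hij.symm⟩⟩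
  · exact fun hTS hiT => disjoint_left.1 hTS hiT (hS ▸ mem_insert_self i {j})

theorem exists_isThirdLine {l m : CubicSurfaceLine} (h : meets l m) :
    ∃ w, IsThirdLine l m w := by
  rcases l with i | S | i <;> rcases m with j | T | j
  · exact h.elim
  · obtain ⟨k, hik, hT⟩ := exists_eq_pair_of_mem_of_card_eq_two T.2 h
    exact ⟨_, isThirdLine_exceptional_line hik hT⟩
  · exact ⟨_, isThirdLine_exceptional_conic h⟩
  · obtain ⟨k, hjk, hS⟩ := exists_eq_pair_of_mem_of_card_eq_two S.2 h
    exact ⟨_, (isThirdLine_exceptional_line hjk hS).symm⟩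
  · exact ⟨_, isThirdLine_line_line (disjoint_iff_inter_eq_empty.2 h)⟩
  · obtain ⟨k, hjk, hS⟩ := exists_eq_pair_of_mem_of_card_eq_two S.2 h
    exact ⟨_, isThirdLine_line_conic hjk hS⟩
  · exact ⟨_, (isThirdLine_exceptional_conic (Ne.symm h)).symm⟩
  · obtain ⟨k, hik, hT⟩ := exists_eq_pair_of_mem_of_card_eq_two T.2 h
    exact ⟨_, (isThirdLine_line_conic hik hT).symm⟩
  · exact h.elim

/-- For every pair of lines `λ`, `μ` on a smooth cubic surface that meet, there is
exactly one further line `ν` meeting both `λ` and `μ` (so each line lies in exactly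
five triangles). -/
theorem unique_third_line_of_triangle (l m : CubicSurfaceLine) (h : meets l m) :
    ∃! n : CubicSurfaceLine, n ≠ l ∧ n ≠ m ∧ meets n l ∧ meets n m := by
  obtain ⟨w, hw⟩ := exists_isThirdLine h
  have hw' : ∀ n, (n ≠ l ∧ n ≠ m ∧ meets n l ∧ meets n m) ↔ n = w := fun n =>
    ⟨fun hn => (hw n).1 hn.2.2,
      fun hn => have hn' := (hw n).2 hn; ⟨ne_of_meets hn'.1, ne_of_meets hn'.2, hn'⟩⟩
  exact (existsUnique_congr hw').2 existsUnique_eq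
end

section
/- In the combinatorial model of the 27 lines on a smooth cubic surface, the disjointness graph — the simple graph on the 27 lines whose edges join distinct lines that do not meet — is connected and has diameter at most two: any two distinct lines are either disjoint, or there exists a third line, distinct from both, that is disjoint from both. -/
/-- The disjointness graph on the 27 lines: distinct lines are adjacent iff they do
not meet. -/
def disjointnessGraph : SimpleGraph CubicSurfaceLine where
  Adj l m := l ≠ m ∧ ¬ meets l m
  symm := ⟨fun l m h => ⟨h.1.symm, fun hm => h.2 (meets_symm m l hm)⟩⟩
  loopless := ⟨fun l h => h.1 rfl⟩

/-! Any two lines, equal or not, are both disjoint from some third line. If neither is an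
`ℓ̂_S`, they lie among `p̂ᵢ, Ĉᵢ, p̂ⱼ, Ĉⱼ`, and `ℓ̂_T` works for any pair `T` avoiding `i` and `j`.
Otherwise the other line is `p̂ᵢ`, `ℓ̂_T` or `Ĉᵢ`, and `p̂ₖ` (or `Ĉₖ` in the last case) works for
an index `k` outside the at most four indices involved. -/

open Finset

theorem SimpleGraph.connected_of_forall_exists_adj_adj {V : Type*} [Nonempty V]
    {G : SimpleGraph V} (h : ∀ u v, ∃ w, G.Adj w u ∧ G.Adj w v) : G.Connected where
  preconnected u v :=
    let ⟨_, hwu, hwv⟩ := h u v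
    hwu.symm.reachable.trans hwv.reachable

theorem Finset.exists_notMem_notMem_of_card_add_card_lt {α : Type*} [Fintype α] [DecidableEq α]
    {s t : Finset α} (h : #s + #t < Fintype.card α) : ∃ a, a ∉ s ∧ a ∉ t := by
  have hcard : #(s ∪ t) < #(univ : Finset α) := (card_union_le s t).trans_lt h
  obtain ⟨a, -, ha⟩ := exists_mem_notMem_of_card_lt_card hcard
  exact ⟨a, fun has => ha (mem_union_left t has), fun hat => ha (mem_union_right s hat)⟩

theorem Finset.exists_card_eq_notMem_notMem {α : Type*} [Fintype α] [DecidableEq α] {n : ℕ}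
    (a b : α) (h : n + 2 ≤ Fintype.card α) : ∃ s : Finset α, #s = n ∧ a ∉ s ∧ b ∉ s := by
  have hn : n ≤ #({a, b}ᶜ : Finset α) := by
    rw [card_compl]
    have := card_le_two (a := a) (b := b)
    omega
  obtain ⟨s, hs, rfl⟩ := exists_subset_card_eq hn
  exact ⟨s, rfl, fun ha => by simpa using hs ha, fun hb => by simpa using hs hb⟩

theorem exists_pair_avoiding (i j : Fin 6) :
    ∃ T : {S : Finset (Fin 6) // S.card = 2}, i ∉ T.1 ∧ j ∉ T.1 := by
  obtain ⟨T, hT, hi, hj⟩ := exists_card_eq_notMem_notMem (n := 2) i j (by simp)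
  exact ⟨⟨T, hT⟩, hi, hj⟩

theorem exists_index_avoiding_pairs (S T : {S : Finset (Fin 6) // S.card = 2}) :
    ∃ k, k ∉ S.1 ∧ k ∉ T.1 :=
  exists_notMem_notMem_of_card_add_card_lt (by simp [S.2, T.2])

theorem exists_index_avoiding_pair_ne (S : {S : Finset (Fin 6) // S.card = 2}) (i : Fin 6) :
    ∃ k, k ∉ S.1 ∧ k ≠ i := by
  simpa using exists_notMem_notMem_of_card_add_card_lt (s := S.1) (t := {i}) (by simp [S.2])

namespace disjointnessGraph

variable {i j : Fin 6} {S : {S : Finset (Fin 6) // S.card = 2}}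

theorem adj_exceptional_exceptional : disjointnessGraph.Adj (.inl i) (.inl j) ↔ i ≠ j := by
  simp [disjointnessGraph, meets]

theorem adj_exceptional_line : disjointnessGraph.Adj (.inl i) (.inr (.inl S)) ↔ i ∉ S.1 := by
  simp [disjointnessGraph, meets]

theorem adj_line_exceptional : disjointnessGraph.Adj (.inr (.inl S)) (.inl i) ↔ i ∉ S.1 := by
  simp [disjointnessGraph, meets]

theorem adj_line_conic : disjointnessGraph.Adj (.inr (.inl S)) (.inr (.inr i)) ↔ i ∉ S.1 := by
  simp [disjointnessGraph, meets]

theorem adj_conic_line : disjointnessGraph.Adj (.inr (.inr i)) (.inr (.inl S)) ↔ i ∉ S.1 := by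
  simp [disjointnessGraph, meets]

theorem adj_conic_conic : disjointnessGraph.Adj (.inr (.inr i)) (.inr (.inr j)) ↔ i ≠ j := by
  simp [disjointnessGraph, meets]

theorem exists_adj_adj (l m : CubicSurfaceLine) :
    ∃ n, disjointnessGraph.Adj n l ∧ disjointnessGraph.Adj n m := by
  rcases l with i | S | i <;> rcases m with j | T | j
  · obtain ⟨T, hi, hj⟩ := exists_pair_avoiding i j
    exact ⟨_, adj_line_exceptional.2 hi, adj_line_exceptional.2 hj⟩
  · obtain ⟨k, hk, hki⟩ := exists_index_avoiding_pair_ne T i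
    exact ⟨_, adj_exceptional_exceptional.2 hki, adj_exceptional_line.2 hk⟩
  · obtain ⟨T, hi, hj⟩ := exists_pair_avoiding i j
    exact ⟨_, adj_line_exceptional.2 hi, adj_line_conic.2 hj⟩
  · obtain ⟨k, hk, hkj⟩ := exists_index_avoiding_pair_ne S j
    exact ⟨_, adj_exceptional_line.2 hk, adj_exceptional_exceptional.2 hkj⟩
  · obtain ⟨k, hkS, hkT⟩ := exists_index_avoiding_pairs S T
    exact ⟨_, adj_exceptional_line.2 hkS, adj_exceptional_line.2 hkT⟩
  · obtain ⟨k, hk, hkj⟩ := exists_index_avoiding_pair_ne S j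
    exact ⟨_, adj_conic_line.2 hk, adj_conic_conic.2 hkj⟩
  · obtain ⟨T, hi, hj⟩ := exists_pair_avoiding i j
    exact ⟨_, adj_line_conic.2 hi, adj_line_exceptional.2 hj⟩
  · obtain ⟨k, hk, hki⟩ := exists_index_avoiding_pair_ne T i
    exact ⟨_, adj_conic_conic.2 hki, adj_conic_line.2 hk⟩
  · obtain ⟨T, hi, hj⟩ := exists_pair_avoiding i j
    exact ⟨_, adj_line_conic.2 hi, adj_line_conic.2 hj⟩

end disjointnessGraph

/-- The disjointness graph on the 27 lines of a smooth cubic surface is connected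
with diameter at most two: any two distinct lines are disjoint, or some third line
is disjoint from both. -/
theorem disjointnessGraph_connected_diameter_le_two :
    disjointnessGraph.Connected ∧
      ∀ l m : CubicSurfaceLine, l ≠ m →
        disjointnessGraph.Adj l m ∨
          ∃ n : CubicSurfaceLine, n ≠ l ∧ n ≠ m ∧
            disjointnessGraph.Adj n l ∧ disjointnessGraph.Adj n m := by
  refine ⟨SimpleGraph.connected_of_forall_exists_adj_adj disjointnessGraph.exists_adj_adj,
    fun l m _ => .inr ?_⟩
  obtain ⟨n, hnl, hnm⟩ := disjointnessGraph.exists_adj_adj l m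
  exact ⟨n, hnl.ne, hnm.ne, hnl, hnm⟩
end
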